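/- Suppose β is an ℋ-measurable real random variable such that e^{−β}·Y·A is integrable and the log relative risk model holds: e^{−β}·E[YA | ℋ]·(1 − p) = E[Y(1 − A) | ℋ]·p almost surely (equivalently, E[Y | ℋ, A = 1] = e^{β}·E[Y | ℋ, A = 0]). Then the blipped-down outcome e^{−Aβ}·Y is conditionally orthogonal to the centered treatment indicator: E[e^{−Aβ}·Y·(A − p) | ℋ] = 0 almost surely. -/

import Mathlib

open MeasureTheory Real

/-- orthogonality of the blipped-down outcome.
Let `(Ω, ℱ, P)` be a probability space, `ℋ ⊆ ℱ` a sub-σ-algebra, `A` a `{0,1}`-valued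
measurable treatment indicator with `p := E[A | ℋ]` satisfying `0 < p < 1` a.s., and `Y`
a nonnegative integrable outcome.  If `β` is ℋ-measurable with `e^{−β}·Y·A` integrable
and the log relative risk model `e^{−β}·E[YA | ℋ]·(1 − p) = E[Y(1 − A) | ℋ]·p` holds
a.s., then `E[e^{−Aβ}·Y·(A − p) | ℋ] = 0` a.s. -/
theorem blipped_down_orthogonality
    {Ω : Type*} (m : MeasurableSpace Ω) {m0 : MeasurableSpace Ω} (μ : Measure Ω) [IsProbabilityMeasure μ]
    (hm : m ≤ m0)
    (A : Ω → ℝ) (hA : Measurable A) (hA01 : ∀ ω, A ω = 0 ∨ A ω = 1)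
    (hp : ∀ᵐ ω ∂μ, 0 < (μ[A|m]) ω ∧ (μ[A|m]) ω < 1)
    (Y : Ω → ℝ) (hY0 : ∀ ω, 0 ≤ Y ω) (hYint : Integrable Y μ)
    (β : Ω → ℝ) (hβ : StronglyMeasurable[m] β)
    (hint : Integrable (fun ω => exp (-(β ω)) * Y ω * A ω) μ)
    (hmodel : (fun ω => exp (-(β ω)) * (μ[(fun ω' => Y ω' * A ω')|m]) ω * (1 - (μ[A|m]) ω))
      =ᵐ[μ] fun ω => (μ[(fun ω' => Y ω' * (1 - A ω'))|m]) ω * (μ[A|m]) ω) :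
    μ[(fun ω => exp (-(A ω * β ω)) * Y ω * (A ω - (μ[A|m]) ω))|m] =ᵐ[μ] 0 := by
  set p : Ω → ℝ := μ[A|m] with hpdef
  have hA0 : Measurable[m0] A := hA
  set g1 : Ω → ℝ := fun ω => exp (-(β ω)) * (1 - p ω) with hg1def
  set g2 : Ω → ℝ := fun ω => -(p ω) with hg2def
  set F1 : Ω → ℝ := fun ω => g1 ω * (Y ω * A ω) with hF1def
  set F2 : Ω → ℝ := fun ω => g2 ω * (Y ω * (1 - A ω)) with hF2def
  have hg1m : StronglyMeasurable[m] g1 :=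
    ((Real.continuous_exp.comp continuous_neg).comp_stronglyMeasurable hβ).mul
      (stronglyMeasurable_const.sub stronglyMeasurable_condExp)
  have hg2m : StronglyMeasurable[m] g2 := stronglyMeasurable_condExp.neg
  have hYA : Integrable (fun ω => Y ω * A ω) μ := by
    refine Integrable.mono' hYint.norm (hYint.1.mul (hA0.aestronglyMeasurable (μ := μ))) ?_
    filter_upwards with ω
    rcases hA01 ω with h | h <;> simp [h, abs_nonneg]
  have hY1A : Integrable (fun ω => Y ω * (1 - A ω)) μ := by
    have := hYint.sub hYA
    simpa [mul_sub, mul_one, Pi.sub_def] using this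
  have h1 : Integrable F1 μ := by
    refine Integrable.mono' hint.norm
      ((hg1m.mono hm).aestronglyMeasurable.mul (hYint.1.mul (hA0.aestronglyMeasurable (μ := μ)))) ?_
    filter_upwards [hp] with ω hpω
    have h1p : ‖1 - p ω‖ ≤ 1 := by
      rw [Real.norm_eq_abs, abs_of_nonneg (by linarith [hpω.1])]
      linarith [hpω.1]
    have heq : ‖F1 ω‖ = ‖1 - p ω‖ * ‖exp (-(β ω)) * Y ω * A ω‖ := by
      simp only [hF1def, hg1def, Real.norm_eq_abs, abs_mul]
      ring
    rw [heq]
    exact mul_le_of_le_one_left (norm_nonneg _) h1p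
  have h2 : Integrable F2 μ := by
    refine Integrable.mono' hY1A.norm
      ((hg2m.mono hm).aestronglyMeasurable.mul
        (hYint.1.mul (aestronglyMeasurable_const.sub (hA0.aestronglyMeasurable (μ := μ))))) ?_
    filter_upwards [hp] with ω hpω
    have h1p : ‖g2 ω‖ ≤ 1 := by
      simp only [hg2def, Real.norm_eq_abs, abs_neg]
      rw [abs_of_nonneg (le_of_lt hpω.1)]
      linarith [hpω.2]
    have heq : ‖F2 ω‖ = ‖g2 ω‖ * ‖Y ω * (1 - A ω)‖ := by
      simp only [hF2def, Real.norm_eq_abs, abs_mul]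
    rw [heq]
    exact mul_le_of_le_one_left (norm_nonneg _) h1p
  have heqfun : (fun ω => exp (-(A ω * β ω)) * Y ω * (A ω - p ω)) = F1 + F2 := by
    funext ω
    simp only [Pi.add_apply, hF1def, hF2def, hg1def, hg2def]
    rcases hA01 ω with h | h <;> simp [h] <;> ring
  have hc1 : μ[F1|m] =ᵐ[μ] g1 * μ[(fun ω => Y ω * A ω)|m] :=
    condExp_mul_of_stronglyMeasurable_left hg1m h1 hYA
  have hc2 : μ[F2|m] =ᵐ[μ] g2 * μ[(fun ω => Y ω * (1 - A ω))|m] :=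
    condExp_mul_of_stronglyMeasurable_left hg2m h2 hY1A
  calc μ[(fun ω => exp (-(A ω * β ω)) * Y ω * (A ω - p ω))|m]
      = μ[F1 + F2|m] := by rw [heqfun]
    _ =ᵐ[μ] μ[F1|m] + μ[F2|m] := condExp_add h1 h2 m
    _ =ᵐ[μ] g1 * μ[(fun ω => Y ω * A ω)|m] + g2 * μ[(fun ω => Y ω * (1 - A ω))|m] :=
        hc1.add hc2
    _ =ᵐ[μ] 0 := by
        filter_upwards [hmodel] with ω hmω
        simp only [Pi.add_apply, Pi.mul_apply, Pi.zero_apply, hg1def, hg2def]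
        linear_combination hmω
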